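/- Let u, v be two distinct points of the open unit disk in ℂ. Then the kinematic measure of the set of geodesics of the Poincaré disk separating u and v equals 2·d_D(u,v). Concretely: ∫_{0}^{2π} ∫_{0}^{∞} 1[exactly one of u, v satisfies |x − coth(t)·e^{iθ}| < 1/sinh(t)] · cosh(t) dt dθ = 2·arcosh(1 + 2|u − v|²/((1 − |u|²)(1 − |v|²))). -/

import Mathlib

/-!
For `t > 0` a point `x` lies inside the geodesic `(t, θ)` iff `sinh t < S_x(θ)`, where `S_x(θ)` is
the value of `sinh t` at which the geodesics of direction `θ` pass through `x`. Substituting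
`s = sinh t`, the inner integral becomes `|S_u(θ)⁺ - S_v(θ)⁺|`, and since `S_x(θ + π) = -S_x(θ)`,
pairing `θ` with `θ + π` shows that the whole integral is half of `∫ |S_u - S_v|` over a period.

In the hyperboloid model `S_x = (arsinh p_x)'`, where `p_x(θ)` is the sinh of the signed distance
from `x` to the diameter of direction `θ`. So the integral is half the total variation of the
antiperiodic function `H = arsinh p_u - arsinh p_v`, that is `2 max H`. The maximum is attained
where `S_u = S_v`, and there `cosh H` is the Lorentzian inner product of the images of `u` and
`v`, namely `cosh d(u, v)`.
-/

open Real MeasureTheory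
open scoped Classical

/-- The inverse hyperbolic cosine. -/
noncomputable def arcosh (x : ℝ) : ℝ := Real.log (x + Real.sqrt (x ^ 2 - 1))

/-- The hyperbolic distance between two points of the Poincaré disk. -/
noncomputable def poincareDist (u v : ℂ) : ℝ :=
  _root_.arcosh (1 + 2 * ‖u - v‖ ^ 2 /
    ((1 - ‖u‖ ^ 2) * (1 - ‖v‖ ^ 2)))

/-- A point `x` of the disk lies on the inner side of the geodesic with polar
coordinates `(t, θ)`, i.e. the Euclidean circle with center `coth t · e^{iθ}` and
radius `1 / sinh t`. -/
def innerSide (x : ℂ) (t θ : ℝ) : Prop :=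
  ‖x - (Real.cosh t / Real.sinh t) * Complex.exp (θ * Complex.I)‖ <
    1 / Real.sinh t

open Set Function

theorem setIntegral_Ioi_cosh_smul_comp_sinh {E : Type*} [NormedAddCommGroup E] [NormedSpace ℝ E]
    (g : ℝ → E) : ∫ t in Ioi 0, cosh t • g (sinh t) = ∫ s in Ioi 0, g s := by
  have himage : sinh '' Ioi 0 = Ioi 0 := by simpa using sinhOrderIso.image_Ioi 0
  conv_rhs => rw [← himage, integral_image_eq_integral_abs_deriv_smul measurableSet_Ioi
    (fun t _ => (hasDerivAt_sinh t).hasDerivWithinAt) sinh_injective.injOn]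
  simp only [abs_of_pos (cosh_pos _)]

theorem setIntegral_Ioi_ite_xor_lt (a b : ℝ) :
    ∫ s in Ioi 0, (if Xor (s < a) (s < b) then (1 : ℝ) else 0) = |max a 0 - max b 0| := by
  wlog hab : a ≤ b generalizing a b
  · rw [abs_sub_comm, ← this b a (le_of_not_ge hab)]
    simp only [xor_comm]
  have hset : {s | Xor (s < a) (s < b)} ∩ Ioi 0 = Ioo 0 b \ Ioo 0 a := by
    ext s
    simp only [mem_inter_iff, mem_ofPred_eq, mem_Ioi, mem_sdiff, mem_Ioo, xor_def]
    constructor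
    · rintro ⟨h | h, h0⟩
      · exact absurd (h.1.trans_le hab) h.2
      · exact ⟨⟨h0, h.1⟩, fun h' => h.2 h'.2⟩
    · rintro ⟨⟨h0, h1⟩, h2⟩
      exact ⟨Or.inr ⟨h1, fun h => h2 ⟨h0, h⟩⟩, h0⟩
  have hmeas : MeasurableSet {s : ℝ | Xor (s < a) (s < b)} := by
    simp only [xor_def]; measurability
  calc ∫ s in Ioi 0, (if Xor (s < a) (s < b) then (1 : ℝ) else 0)
      = (volume.restrict (Ioi 0)).real {s | Xor (s < a) (s < b)} := by
        rw [← integral_indicator_one hmeas]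
        simp only [indicator_apply, mem_ofPred_eq, Pi.one_apply]
    _ = volume.real (Ioo 0 b) - volume.real (Ioo 0 a) := by
        rw [measureReal_restrict_apply hmeas, hset,
          measureReal_sdiff (Ioo_subset_Ioo_right hab) measurableSet_Ioo measure_Ioo_lt_top.ne]
    _ = |max a 0 - max b 0| := by
        rw [volume_real_Ioo, volume_real_Ioo, sub_zero, sub_zero,
          abs_of_nonpos (sub_nonpos.2 (max_le_max_right 0 hab)), neg_sub]

lemma cosh_arsinh_sub_arsinh {U V m n p q : ℝ} (hU : U ^ 2 = 1 + m ^ 2 + p ^ 2)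
    (hV : V ^ 2 = 1 + n ^ 2 + q ^ 2) (hU0 : 0 ≤ U) (hV0 : 0 ≤ V) (h : V * m = U * n) :
    cosh (arsinh p - arsinh q) = U * V - (m * n + p * q) := by
  have hmn : m * n ≤ U * V := by
    have : (m * n) ^ 2 ≤ (U * V) ^ 2 := by
      rw [mul_pow, mul_pow]
      exact mul_le_mul (by nlinarith) (by nlinarith) (sq_nonneg n) (sq_nonneg U)
    exact (abs_le_of_sq_le_sq' this (by positivity)).2
  have hroot : √(1 + p ^ 2) * √(1 + q ^ 2) = U * V - m * n := by
    rw [← sqrt_mul (by positivity), ← sqrt_sq (sub_nonneg.2 hmn)]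
    congr 1
    linear_combination (-(1 + q ^ 2)) * hU + (-(U ^ 2 - m ^ 2)) * hV + (U * n - V * m) * h
  rw [cosh_sub, cosh_arsinh, cosh_arsinh, sinh_arsinh, sinh_arsinh, hroot]
  ring

lemma exists_nonneg_on_Icc_mul_cos_add_mul_sin (A B : ℝ) :
    ∃ α, (∀ θ ∈ Icc α (α + π), 0 ≤ A * cos θ + B * sin θ) ∧
      A * cos (α + π) + B * sin (α + π) = 0 := by
  set z : ℂ := ⟨A, B⟩
  have hz : ∀ θ, A * cos θ + B * sin θ = ‖z‖ * cos (θ - Complex.arg z) := fun θ => by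
    have hre : ‖z‖ * cos (Complex.arg z) = A := Complex.norm_mul_cos_arg z
    have him : ‖z‖ * sin (Complex.arg z) = B := Complex.norm_mul_sin_arg z
    rw [cos_sub, ← hre, ← him]
    ring
  refine ⟨Complex.arg z - π / 2, fun θ hθ => ?_, ?_⟩
  · rw [hz]
    exact mul_nonneg (norm_nonneg z)
      (cos_nonneg_of_mem_Icc ⟨by linarith [hθ.1], by linarith [hθ.2]⟩)
  · rw [hz, show Complex.arg z - π / 2 + π - Complex.arg z = π / 2 by ring, cos_pi_div_two,
      mul_zero]

lemma abs_max_sub_max_add_abs_max_neg_sub_max_neg (a b : ℝ) :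
    |max a 0 - max b 0| + |max (-a) 0 - max (-b) 0| = |a - b| := by
  wlog hba : b ≤ a generalizing a b
  · rw [abs_sub_comm, abs_sub_comm (max (-a) 0), abs_sub_comm a]
    exact this b a (le_of_not_ge hba)
  rw [abs_of_nonneg (sub_nonneg.2 (max_le_max_right 0 hba)),
    abs_of_nonpos (sub_nonpos.2 (max_le_max_right 0 (neg_le_neg hba))),
    abs_of_nonneg (sub_nonneg.2 hba)]
  linarith [max_zero_sub_max_neg_zero_eq_self a, max_zero_sub_max_neg_zero_eq_self b]

theorem intervalIntegral_abs_max_sub_max_of_antiperiodic {f g : ℝ → ℝ} {T : ℝ}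
    (hf : Antiperiodic f T) (hg : Antiperiodic g T) (hfc : Continuous f) (hgc : Continuous g)
    (a : ℝ) :
    2 * ∫ θ in a..a + 2 * T, |max (f θ) 0 - max (g θ) 0| = ∫ θ in a..a + 2 * T, |f θ - g θ| := by
  set F := fun θ => |max (f θ) 0 - max (g θ) 0|
  have hFc : Continuous F := by fun_prop
  have hFper : Periodic F (2 * T) := fun θ => by
    simp only [F, hf.periodic_two_mul θ, hg.periodic_two_mul θ]
  have hshift : ∫ θ in a..a + 2 * T, F (θ + T) = ∫ θ in a..a + 2 * T, F θ := by
    rw [intervalIntegral.integral_comp_add_right, add_right_comm,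
      hFper.intervalIntegral_add_eq (a + T) a]
  rw [two_mul]
  nth_rw 2 [← hshift]
  rw [← intervalIntegral.integral_add (hFc.intervalIntegrable _ _)
    ((show Continuous fun θ => F (θ + T) by fun_prop).intervalIntegrable _ _)]
  congr 1 with θ
  simp only [F, hf θ, hg θ, abs_max_sub_max_add_abs_max_neg_sub_max_neg]

theorem intervalIntegral_abs_deriv_of_antiperiodic {H h : ℝ → ℝ} {T a : ℝ} (hT : 0 ≤ T)
    (hH : ∀ θ, HasDerivAt H (h θ) θ) (hh : Continuous h) (hanti : Antiperiodic H T)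
    (hpos : ∀ θ ∈ Icc a (a + T), 0 ≤ h θ) (b : ℝ) :
    ∫ θ in b..b + 2 * T, |h θ| = 4 * H (a + T) := by
  have hh_anti : Antiperiodic h T := fun θ => by
    have h1 := (hH (θ + T)).comp_add_const θ T
    rw [show (fun x => H (x + T)) = fun x => -H x from funext hanti] at h1
    exact h1.unique (hH θ).neg
  have hper : Periodic (fun θ => |h θ|) T := fun θ => by simp only [hh_anti θ, abs_neg]
  have hhalf : ∫ θ in a..a + T, |h θ| = 2 * H (a + T) := by
    rw [intervalIntegral.integral_congr (g := h) fun θ hθ => abs_of_nonneg (hpos θ (by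
      simpa [uIcc_of_le (le_add_of_nonneg_right hT)] using hθ)),
      intervalIntegral.integral_eq_sub_of_hasDerivAt (fun θ _ => hH θ) (hh.intervalIntegrable _ _)]
    linarith [hanti a]
  have := hper.intervalIntegral_add_zsmul_eq 2 b fun _ _ => hh.abs.intervalIntegrable _ _
  simp only [zsmul_eq_mul, Int.cast_ofNat] at this
  rw [this, hper.intervalIntegral_add_eq b a, hhalf]
  ring

namespace PoincareDisk

lemma sq_norm_eq_re_sq_add_im_sq (x : ℂ) : ‖x‖ ^ 2 = x.re ^ 2 + x.im ^ 2 := by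
  rw [Complex.sq_norm, Complex.normSq_apply]; ring

lemma one_sub_sq_norm_pos {x : ℂ} (hx : ‖x‖ < 1) : 0 < 1 - ‖x‖ ^ 2 := by
  nlinarith [norm_nonneg x]

/-- `tanh` of the parameter `t` at which the geodesic of direction `θ` passes through `x`. -/
noncomputable def crossingTanh (x : ℂ) (θ : ℝ) : ℝ :=
  2 * (x.re * cos θ + x.im * sin θ) / (1 + ‖x‖ ^ 2)

lemma sq_norm_sub_mul_exp (x : ℂ) (r θ : ℝ) :
    ‖x - r * Complex.exp (θ * Complex.I)‖ ^ 2 =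
      (x.re - r * cos θ) ^ 2 + (x.im - r * sin θ) ^ 2 := by
  rw [sq_norm_eq_re_sq_add_im_sq]
  simp [Complex.exp_ofReal_mul_I_re, Complex.exp_ofReal_mul_I_im]

theorem innerSide_iff_tanh_lt (x : ℂ) {t : ℝ} (ht : 0 < t) (θ : ℝ) :
    innerSide x t θ ↔ tanh t < crossingTanh x θ := by
  have hs : 0 < sinh t := sinh_pos_iff.2 ht
  have hsq : 1 - ‖x - (cosh t / sinh t : ℝ) * Complex.exp (θ * Complex.I)‖ ^ 2 * sinh t ^ 2
      = sinh t * (2 * (x.re * cos θ + x.im * sin θ) * cosh t - sinh t * (1 + ‖x‖ ^ 2)) := by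
    rw [sq_norm_sub_mul_exp, sq_norm_eq_re_sq_add_im_sq]
    field_simp
    linear_combination (-(cosh t ^ 2)) * sin_sq_add_cos_sq θ - cosh_sq t
  unfold innerSide
  rw [← Complex.ofReal_div, ← sq_lt_sq₀ (norm_nonneg _) (by positivity), div_pow, one_pow,
    lt_div_iff₀ (by positivity), ← sub_pos, hsq, mul_pos_iff_of_pos_left hs, sub_pos,
    tanh_eq_sinh_div_cosh, crossingTanh, div_lt_div_iff₀ (cosh_pos t) (by positivity)]

/-- `(hypTime x, radial x θ, transverse x θ)` are the coordinates of the image of `x` in the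
hyperboloid model, in the spatial frame `(e^{iθ}, -i e^{iθ})`. -/
noncomputable def hypTime (x : ℂ) : ℝ := (1 + ‖x‖ ^ 2) / (1 - ‖x‖ ^ 2)

noncomputable def radial (x : ℂ) (θ : ℝ) : ℝ :=
  2 * (x.re * cos θ + x.im * sin θ) / (1 - ‖x‖ ^ 2)

noncomputable def transverse (x : ℂ) (θ : ℝ) : ℝ :=
  2 * (x.re * sin θ - x.im * cos θ) / (1 - ‖x‖ ^ 2)

noncomputable def crossingSinh (x : ℂ) (θ : ℝ) : ℝ := radial x θ / √(1 + transverse x θ ^ 2)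

lemma hypTime_pos {x : ℂ} (hx : ‖x‖ < 1) : 0 < hypTime x :=
  div_pos (by positivity) (one_sub_sq_norm_pos hx)

lemma hypTime_sq {x : ℂ} (hx : ‖x‖ < 1) (θ : ℝ) :
    hypTime x ^ 2 = 1 + radial x θ ^ 2 + transverse x θ ^ 2 := by
  have := one_sub_sq_norm_pos hx
  simp only [hypTime, radial, transverse]
  field_simp
  rw [sq_norm_eq_re_sq_add_im_sq]
  linear_combination (-(4 * (x.re ^ 2 + x.im ^ 2))) * sin_sq_add_cos_sq θ

lemma crossingTanh_eq_radial_div_hypTime {x : ℂ} (hx : ‖x‖ < 1) (θ : ℝ) :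
    crossingTanh x θ = radial x θ / hypTime x := by
  have := one_sub_sq_norm_pos hx
  simp only [crossingTanh, radial, hypTime]
  field_simp

lemma crossingTanh_mem_Ioo {x : ℂ} (hx : ‖x‖ < 1) (θ : ℝ) : crossingTanh x θ ∈ Ioo (-1) 1 := by
  have hU := hypTime_pos hx
  rw [mem_Ioo, ← abs_lt, ← sq_lt_one_iff_abs_lt_one, crossingTanh_eq_radial_div_hypTime hx,
    div_pow, div_lt_one (by positivity)]
  nlinarith [hypTime_sq hx θ, sq_nonneg (transverse x θ)]

lemma sinh_artanh_crossingTanh {x : ℂ} (hx : ‖x‖ < 1) (θ : ℝ) :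
    sinh (artanh (crossingTanh x θ)) = crossingSinh x θ := by
  have hU := hypTime_pos hx
  have h : 1 - (radial x θ / hypTime x) ^ 2 = (√(1 + transverse x θ ^ 2) / hypTime x) ^ 2 := by
    rw [div_pow, div_pow, sq_sqrt (by positivity)]
    field_simp
    linarith [hypTime_sq hx θ]
  rw [sinh_artanh (crossingTanh_mem_Ioo hx θ), crossingTanh_eq_radial_div_hypTime hx, h,
    sqrt_sq (by positivity), div_div_div_cancel_right₀ hU.ne', crossingSinh]

theorem innerSide_iff_sinh_lt {x : ℂ} (hx : ‖x‖ < 1) {t : ℝ} (ht : 0 < t) (θ : ℝ) :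
    innerSide x t θ ↔ sinh t < crossingSinh x θ := by
  rw [innerSide_iff_tanh_lt x ht, ← sinh_artanh_crossingTanh hx, sinh_lt_sinh,
    ← artanh_lt_artanh_iff ⟨neg_one_lt_tanh t, tanh_lt_one t⟩ (crossingTanh_mem_Ioo hx θ),
    artanh_tanh]

theorem crossingSinh_le_crossingSinh_iff {u v : ℂ} (hu : ‖u‖ < 1) (hv : ‖v‖ < 1) (θ : ℝ) :
    crossingSinh u θ ≤ crossingSinh v θ ↔ crossingTanh u θ ≤ crossingTanh v θ := by
  rw [← sinh_artanh_crossingTanh hu, ← sinh_artanh_crossingTanh hv, sinh_le_sinh,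
    artanh_le_artanh_iff (crossingTanh_mem_Ioo hu θ) (crossingTanh_mem_Ioo hv θ)]

lemma exists_crossingTanh_le_on_Icc (u v : ℂ) :
    ∃ α, (∀ θ ∈ Icc α (α + π), crossingTanh v θ ≤ crossingTanh u θ) ∧
      crossingTanh u (α + π) = crossingTanh v (α + π) := by
  set A := 2 * u.re / (1 + ‖u‖ ^ 2) - 2 * v.re / (1 + ‖v‖ ^ 2)
  set B := 2 * u.im / (1 + ‖u‖ ^ 2) - 2 * v.im / (1 + ‖v‖ ^ 2)
  have hdiff : ∀ θ, crossingTanh u θ - crossingTanh v θ = A * cos θ + B * sin θ := fun θ => by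
    simp only [crossingTanh, A, B]; ring
  obtain ⟨α, hle, heq⟩ := exists_nonneg_on_Icc_mul_cos_add_mul_sin A B
  exact ⟨α, fun θ hθ => sub_nonneg.1 (hdiff θ ▸ hle θ hθ), sub_eq_zero.1 (hdiff _ ▸ heq)⟩

lemma antiperiodic_transverse (x : ℂ) : Antiperiodic (transverse x) π := fun θ => by
  simp only [transverse, sin_add_pi, cos_add_pi]; ring

lemma antiperiodic_crossingSinh (x : ℂ) : Antiperiodic (crossingSinh x) π := fun θ => by
  simp only [crossingSinh, radial, antiperiodic_transverse x θ, sin_add_pi, cos_add_pi, neg_sq]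
  ring

lemma continuous_crossingSinh (x : ℂ) : Continuous (crossingSinh x) := by
  refine Continuous.div (by unfold radial; fun_prop) (by unfold transverse; fun_prop) fun θ => ?_
  positivity

lemma hasDerivAt_arsinh_transverse (x : ℂ) (θ : ℝ) :
    HasDerivAt (fun θ => arsinh (transverse x θ)) (crossingSinh x θ) θ := by
  have h : HasDerivAt (transverse x) (radial x θ) θ := by
    have := (((hasDerivAt_sin θ).const_mul x.re).sub
      ((hasDerivAt_cos θ).const_mul x.im)).const_mul 2 |>.div_const (1 - ‖x‖ ^ 2)
    exact this.congr_deriv (by rw [radial]; ring)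
  exact ((hasDerivAt_arsinh _).comp θ h).congr_deriv (by rw [crossingSinh, div_eq_inv_mul])

theorem hypTime_mul_hypTime_sub {u v : ℂ} (hu : ‖u‖ < 1) (hv : ‖v‖ < 1) (θ : ℝ) :
    hypTime u * hypTime v - (radial u θ * radial v θ + transverse u θ * transverse v θ)
      = 1 + 2 * ‖u - v‖ ^ 2 / ((1 - ‖u‖ ^ 2) * (1 - ‖v‖ ^ 2)) := by
  have := one_sub_sq_norm_pos hu
  have := one_sub_sq_norm_pos hv
  simp only [hypTime, radial, transverse]
  field_simp
  simp only [sq_norm_eq_re_sq_add_im_sq, Complex.sub_re, Complex.sub_im]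
  linear_combination (-4 * (u.re * v.re + u.im * v.im)) * sin_sq_add_cos_sq θ

theorem arsinh_transverse_sub_eq_poincareDist {u v : ℂ} (hu : ‖u‖ < 1) (hv : ‖v‖ < 1) {θ : ℝ}
    (heq : crossingTanh u θ = crossingTanh v θ)
    (hnonneg : 0 ≤ arsinh (transverse u θ) - arsinh (transverse v θ)) :
    arsinh (transverse u θ) - arsinh (transverse v θ) = poincareDist u v := by
  have hUu := hypTime_pos hu
  have hUv := hypTime_pos hv
  rw [crossingTanh_eq_radial_div_hypTime hu, crossingTanh_eq_radial_div_hypTime hv,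
    div_eq_div_iff hUu.ne' hUv.ne'] at heq
  rw [poincareDist, ← hypTime_mul_hypTime_sub hu hv θ, ← cosh_arsinh_sub_arsinh (hypTime_sq hu θ)
    (hypTime_sq hv θ) hUu.le hUv.le (by linarith)]
  exact (arcosh_cosh hnonneg).symm

theorem setIntegral_Ioi_xor_innerSide {u v : ℂ} (hu : ‖u‖ < 1) (hv : ‖v‖ < 1) (θ : ℝ) :
    ∫ t in Ioi 0, (if Xor (innerSide u t θ) (innerSide v t θ) then cosh t else 0)
      = |max (crossingSinh u θ) 0 - max (crossingSinh v θ) 0| := by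
  rw [← setIntegral_Ioi_ite_xor_lt, ← setIntegral_Ioi_cosh_smul_comp_sinh
    (fun s => if Xor (s < crossingSinh u θ) (s < crossingSinh v θ) then (1 : ℝ) else 0)]
  refine setIntegral_congr_fun measurableSet_Ioi fun t ht => ?_
  simp only [innerSide_iff_sinh_lt hu ht, innerSide_iff_sinh_lt hv ht, smul_eq_mul, mul_ite,
    mul_one, mul_zero]

end PoincareDisk

open PoincareDisk

theorem kinematic_measure_separating_geodesics_general (u v : ℂ)
    (hu : ‖u‖ < 1) (hv : ‖v‖ < 1) :
    ∫ θ in (0 : ℝ)..(2 * π),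
      ∫ t in Set.Ioi (0 : ℝ),
        (if Xor' (innerSide u t θ) (innerSide v t θ) then Real.cosh t else 0)
      = 2 * poincareDist u v := by
  obtain ⟨α, hle, heq⟩ := exists_crossingTanh_le_on_Icc u v
  set H := fun θ => arsinh (transverse u θ) - arsinh (transverse v θ)
  have hvariation : ∫ θ in 0..0 + 2 * π, |crossingSinh u θ - crossingSinh v θ| = 4 * H (α + π) :=
    intervalIntegral_abs_deriv_of_antiperiodic pi_pos.le
      (fun θ => (hasDerivAt_arsinh_transverse u θ).sub (hasDerivAt_arsinh_transverse v θ))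
      ((continuous_crossingSinh u).sub (continuous_crossingSinh v))
      (fun θ => by
        simp only [Pi.sub_apply, antiperiodic_transverse _ θ, arsinh_neg]; ring)
      (fun θ hθ => sub_nonneg.2 ((crossingSinh_le_crossingSinh_iff hv hu θ).2 (hle θ hθ))) 0
  have hH : 0 ≤ H (α + π) := by
    have : 0 ≤ ∫ θ in 0..0 + 2 * π, |crossingSinh u θ - crossingSinh v θ| :=
      intervalIntegral.integral_nonneg (by positivity) fun θ _ => abs_nonneg _
    linarith
  calc _ = ∫ θ in 0..0 + 2 * π, |max (crossingSinh u θ) 0 - max (crossingSinh v θ) 0| := by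
        rw [zero_add]
        exact intervalIntegral.integral_congr fun θ _ => by
          convert setIntegral_Ioi_xor_innerSide hu hv θ
          exact Iff.rfl
    _ = 2 * H (α + π) := by
        linarith [intervalIntegral_abs_max_sub_max_of_antiperiodic (antiperiodic_crossingSinh u)
          (antiperiodic_crossingSinh v) (continuous_crossingSinh u) (continuous_crossingSinh v) 0]
    _ = 2 * poincareDist u v := by
        rw [← arsinh_transverse_sub_eq_poincareDist hu hv heq hH]

/-- The kinematic measure of the set of geodesics of the Poincaré disk separating
two distinct points `u, v` of the open unit disk equals twice their hyperbolic
distance. -/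
theorem kinematic_measure_separating_geodesics (u v : ℂ)
    (hu : ‖u‖ < 1) (hv : ‖v‖ < 1) (huv : u ≠ v) :
    ∫ θ in (0 : ℝ)..(2 * π),
      ∫ t in Set.Ioi (0 : ℝ),
        (if Xor' (innerSide u t θ) (innerSide v t θ) then Real.cosh t else 0)
      = 2 * poincareDist u v :=
  kinematic_measure_separating_geodesics_general u v hu hv
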